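/- For every natural number N ≥ 1, the asymptotic performance of the circular buffer BUFF is 4: the sequence rp_BUFF(n)/n converges to 4 as n → ∞. -/

import Mathlib

open scoped ENNReal

/-- Labels of steps in the BUFF transition system. -/
inductive BLabel : Type
  | tick | ins | write | read | outs
deriving DecidableEq

/-- States of the BUFF transition system: `(x, y, m, u)` where `x, y ∈ {0,1}` are the
input/output flags of the buffer controller (encoded as `Bool`), `m ∈ {0, …, N}` is the
number of values in the storage, and `u` is an urgency flag (`true` = urgent). -/
abbrev BState : Type := Bool × Bool × ℕ × Bool

/-- Steps of the BUFF transition system (storage of `N` circularly used cells). -/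
inductive BStep (N : ℕ) : BState → BLabel → BState → Prop
  | tick (x y : Bool) (m : ℕ) : BStep N (x, y, m, false) BLabel.tick (x, y, m, true)
  | ins (y : Bool) (m : ℕ) (u : Bool) :
      BStep N (false, y, m, u) BLabel.ins (true, y, m, false)
  | write (y : Bool) (m : ℕ) (u : Bool) (h : m < N) :
      BStep N (true, y, m, u) BLabel.write (false, y, m + 1, false)
  | read (x : Bool) (m : ℕ) (u : Bool) (h : 0 < m) :
      BStep N (x, false, m, u) BLabel.read (x, true, m - 1, false)
  | outs (x : Bool) (m : ℕ) (u : Bool) :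
      BStep N (x, true, m, u) BLabel.outs (x, false, m, false)

/-- `BPath N s ls` : `ls` is the sequence of labels of a finite path of consecutive
steps starting in state `s`. -/
inductive BPath (N : ℕ) : BState → List BLabel → Prop
  | nil (s : BState) : BPath N s []
  | cons {s s' : BState} {l : BLabel} {ls : List BLabel} :
      BStep N s l s' → BPath N s' ls → BPath N s (l :: ls)

/-- A path of the BUFF system: a path starting in the initial state `(0, 0, 0, relaxed)`. -/
def BuffPath (N : ℕ) (ls : List BLabel) : Prop := BPath N (false, false, 0, false) ls

/-- An `n`-admissible path of the BUFF system: at most `n` `in`-steps and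
at most `n - 1` `out`-steps. -/
def BuffAdmissible (N n : ℕ) (ls : List BLabel) : Prop :=
  BuffPath N ls ∧ ls.count BLabel.ins ≤ n ∧ ls.count BLabel.outs ≤ n - 1

/-- The response performance of the BUFF buffer: the supremum (in `ℕ∞`) of the
number of ticks over all `n`-admissible paths. -/
noncomputable def rpBuff (N n : ℕ) : ℕ∞ :=
  sSup {k : ℕ∞ | ∃ ls : List BLabel, BuffAdmissible N n ls ∧ (ls.count BLabel.tick : ℕ∞) = k}

/-!
Every tick must be followed by an action step before the next tick, so a path has at most one
more tick than action steps. Along a path from the initial state, `write`s never outnumber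
`in`s and `read`s never outnumber `write`s, so an `n`-admissible path has at most
`n + n + n + (n - 1) + 1 = 4 * n` ticks. Conversely, serving `n` values one at a time, with a
tick before each of `in`, `write`, `read`, `out` and omitting the last `out`, attains `4 * n`
as soon as the storage has a cell. Hence `rp_BUFF(n) = 4 * n` for all `n ≥ 1`.
-/

namespace BPath

variable {N : ℕ} {s : BState} {ls : List BLabel}

theorem count_write_le (h : BPath N s ls) :
    ls.count .write ≤ ls.count .ins + s.1.toNat := by
  induction h with
  | nil => simp
  | cons hst _ ih => cases hst <;> simp at ih ⊢ <;> omega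

theorem count_read_le (h : BPath N s ls) :
    ls.count .read ≤ ls.count .write + s.2.2.1 := by
  induction h with
  | nil => simp
  | cons hst _ ih => cases hst <;> simp at ih ⊢ <;> omega

theorem count_tick_le (h : BPath N s ls) :
    ls.count .tick ≤ ls.count .ins + ls.count .write + ls.count .read + ls.count .outs
      + (!s.2.2.2).toNat := by
  induction h with
  | nil => simp
  | cons hst _ ih => cases hst <;> simp at ih ⊢ <;> omega

end BPath

theorem BuffPath.count_tick_le {N : ℕ} {ls : List BLabel} (h : BuffPath N ls) :
    ls.count .tick ≤ 3 * ls.count .ins + ls.count .outs + 1 := by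
  have hwrite := BPath.count_write_le h
  have hread := BPath.count_read_le h
  have htick := BPath.count_tick_le h
  simp only [Bool.toNat_false, Bool.not_false, Bool.toNat_true, add_zero] at hwrite hread htick
  omega

theorem BuffAdmissible.count_tick_le {N n : ℕ} (hn : 1 ≤ n) {ls : List BLabel}
    (h : BuffAdmissible N n ls) : ls.count .tick ≤ 4 * n := by
  have := h.1.count_tick_le
  obtain ⟨-, hins, houts⟩ := h
  omega

inductive BPathTo (N : ℕ) : BState → List BLabel → BState → Prop
  | nil (s : BState) : BPathTo N s [] s
  | cons {s s' t : BState} {l : BLabel} {ls : List BLabel} :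
      BStep N s l s' → BPathTo N s' ls t → BPathTo N s (l :: ls) t

namespace BPathTo

variable {N : ℕ} {s t u : BState} {ls ls' : List BLabel}

theorem toBPath (h : BPathTo N s ls t) : BPath N s ls := by
  induction h with
  | nil s => exact .nil s
  | cons hst _ ih => exact .cons hst ih

theorem append (h : BPathTo N s ls t) (h' : BPathTo N t ls' u) :
    BPathTo N s (ls ++ ls') u := by
  induction h with
  | nil => exact h'
  | cons hst _ ih => exact .cons hst (ih h')

end BPathTo

def buffRound : List BLabel := [.tick, .ins, .tick, .write, .tick, .read, .tick]

def buffWitness : ℕ → List BLabel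
  | 0 => buffRound
  | k + 1 => buffRound ++ .outs :: buffWitness k

theorem bPathTo_buffRound {N : ℕ} (hN : 1 ≤ N) :
    BPathTo N (false, false, 0, false) buffRound (false, true, 0, true) :=
  .cons (.tick _ _ _) <| .cons (.ins _ _ _) <| .cons (.tick _ _ _) <| .cons (.write _ _ _ hN) <|
    .cons (.tick _ _ _) <| .cons (.read _ _ _ one_pos) <| .cons (.tick _ _ _) <| .nil _

theorem bPathTo_buffWitness {N : ℕ} (hN : 1 ≤ N) (k : ℕ) :
    BPathTo N (false, false, 0, false) (buffWitness k) (false, true, 0, true) := by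
  induction k with
  | zero => exact bPathTo_buffRound hN
  | succ k ih => exact (bPathTo_buffRound hN).append (.cons (.outs _ _ _) ih)

theorem count_tick_buffWitness (k : ℕ) : (buffWitness k).count .tick = 4 * (k + 1) := by
  induction k with
  | zero => rfl
  | succ k ih => simp [buffWitness, buffRound, ih]; ring

theorem count_ins_buffWitness (k : ℕ) : (buffWitness k).count .ins = k + 1 := by
  induction k with
  | zero => rfl
  | succ k ih => simp [buffWitness, buffRound, ih]

theorem count_outs_buffWitness (k : ℕ) : (buffWitness k).count .outs = k := by
  induction k with
  | zero => rfl
  | succ k ih => simp [buffWitness, buffRound, ih]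

theorem buffWitness_admissible {N n : ℕ} (hN : 1 ≤ N) (hn : 1 ≤ n) :
    BuffAdmissible N n (buffWitness (n - 1)) :=
  ⟨(bPathTo_buffWitness hN _).toBPath, (count_ins_buffWitness _).trans_le (by omega),
    (count_outs_buffWitness _).le⟩

theorem rpBuff_eq {N n : ℕ} (hN : 1 ≤ N) (hn : 1 ≤ n) : rpBuff N n = (4 * n : ℕ) := by
  refine le_antisymm (sSup_le ?_) (le_sSup ⟨buffWitness (n - 1), buffWitness_admissible hN hn, ?_⟩)
  · rintro k ⟨ls, hls, rfl⟩
    exact_mod_cast hls.count_tick_le hn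
  · rw [count_tick_buffWitness, Nat.sub_add_cancel hn]

/-- For every `N ≥ 1`, the asymptotic performance of the circular buffer BUFF is `4`:
the sequence `rp_BUFF(n) / n` converges to `4` as `n → ∞`. -/
theorem buff_asymptotic_performance (N : ℕ) (hN : 1 ≤ N) :
    Filter.Tendsto (fun n : ℕ => ((rpBuff N n : ℝ≥0∞) / (n : ℝ≥0∞)))
      Filter.atTop (nhds 4) := by
  refine tendsto_const_nhds.congr' ?_
  filter_upwards [Filter.eventually_ge_atTop 1] with n hn
  rw [rpBuff_eq hN hn]
  push_cast
  exact (ENNReal.mul_div_cancel_right (by positivity) (ENNReal.natCast_ne_top n)).symm
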